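/- Let A = P₁ + P₂ with P₁, P₂ positive semidefinite and Σ Hermitian positive definite, with P̃ᵢ = Σ^{-1/2}PᵢΣ^{-1/2} and Ã = Σ^{-1/2}AΣ^{-1/2}. If the matrix K = Ã + P̃₁*P̃₂*Ã is positive definite (Re(x*Kx) > 0 for all nonzero x), then ρ((Σ + P₁)^{-1}(Σ - P₂)(Σ + P₂)^{-1}(Σ - P₁)) < 1. -/

import Mathlib

open Matrix ComplexOrder

noncomputable def specNorm {n : ℕ} (M : Matrix (Fin n) (Fin n) ℂ) : ℝ :=
  ‖Matrix.toEuclideanCLM (𝕜 := ℂ) M‖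

noncomputable def evnorm {n : ℕ} (x : Fin n → ℂ) : ℝ :=
  ‖(WithLp.equiv 2 (Fin n → ℂ)).symm x‖


lemma re_star_dot_pos {n : ℕ} {v : Fin n → ℂ} (hv : v ≠ 0) :
    0 < (star v ⬝ᵥ v).re := by
  have h : (star v ⬝ᵥ v).re = ∑ i, Complex.normSq (v i) := by
    simp [dotProduct, Complex.re_sum, Complex.mul_re, Complex.normSq_apply]
  rw [h]
  obtain ⟨i, hi⟩ := Function.ne_iff.mp hv
  exact Finset.sum_pos' (fun j _ => Complex.normSq_nonneg _)
    ⟨i, Finset.mem_univ i, by simpa using Complex.normSq_pos.mpr hi⟩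

lemma isUnit_det_of_pd {n : ℕ} {M : Matrix (Fin n) (Fin n) ℂ}
    (h : ∀ x : Fin n → ℂ, x ≠ 0 → 0 < (star x ⬝ᵥ M *ᵥ x).re) : IsUnit M.det := by
  rw [isUnit_iff_ne_zero]
  intro hd
  obtain ⟨v, hv, hMv⟩ := (Matrix.exists_mulVec_eq_zero_iff).mpr hd
  have := h v hv
  rw [hMv] at this
  simp at this

lemma quad_mul {n : ℕ} (A B : Matrix (Fin n) (Fin n) ℂ) (v : Fin n → ℂ) :
    star v ⬝ᵥ (Aᴴ * B) *ᵥ v = star (A *ᵥ v) ⬝ᵥ (B *ᵥ v) := by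
  rw [← Matrix.mulVec_mulVec, Matrix.dotProduct_mulVec (star v), ← Matrix.star_mulVec]

lemma re_quad_conjTranspose {n : ℕ} (K : Matrix (Fin n) (Fin n) ℂ) (v : Fin n → ℂ) :
    (star v ⬝ᵥ Kᴴ *ᵥ v).re = (star v ⬝ᵥ K *ᵥ v).re := by
  have h : star v ⬝ᵥ Kᴴ *ᵥ v = star (star v ⬝ᵥ K *ᵥ v) := by
    rw [Matrix.star_dotProduct, Matrix.star_mulVec, conjTranspose_conjTranspose,
      ← Matrix.dotProduct_mulVec]
  rw [h]
  simp [Complex.conj_re]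

lemma quad_sandwich {n : ℕ} (T P : Matrix (Fin n) (Fin n) ℂ) (hT : Tᴴ = T) (x : Fin n → ℂ) :
    star x ⬝ᵥ (T * P * T) *ᵥ x = star (T *ᵥ x) ⬝ᵥ P *ᵥ (T *ᵥ x) := by
  have : T * P * T = Tᴴ * (P * T) := by rw [hT, Matrix.mul_assoc]
  rw [this, quad_mul, Matrix.mulVec_mulVec]
lemma quad_norm_eq {n : ℕ} (w : Fin n → ℂ) :
    ‖(WithLp.equiv 2 (Fin n → ℂ)).symm w‖ ^ 2 = (star w ⬝ᵥ w).re := by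
  rw [EuclideanSpace.norm_eq]
  rw [Real.sq_sqrt (by positivity)]
  simp [dotProduct, Complex.re_sum, Complex.mul_re, Complex.sq_norm, Complex.normSq_apply]

lemma specRadius_lt_one {n : ℕ} (R : Matrix (Fin n) (Fin n) ℂ)
    (h : ∀ v : Fin n → ℂ, v ≠ 0 → (star (R *ᵥ v) ⬝ᵥ (R *ᵥ v)).re < (star v ⬝ᵥ v).re) :
    spectralRadius ℂ R < 1 := by
  rcases Nat.eq_zero_or_pos n with hn | hn
  · subst hn
    have : spectrum ℂ R = ∅ := by
      ext μ
      simp only [spectrum.mem_iff, Set.mem_empty_iff_false, iff_false, not_not]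
      exact isUnit_of_subsingleton _
    rw [spectralRadius, this]
    simp
  -- the CLM
  set f := Matrix.toEuclideanCLM (𝕜 := ℂ) (n := Fin n) R with hf
  have hfx : ∀ x : EuclideanSpace ℂ (Fin n), x ≠ 0 → ‖f x‖ < ‖x‖ := by
    intro x hx
    have hx' : (WithLp.equiv 2 (Fin n → ℂ)) x ≠ 0 := by
      simpa using hx
    have h1 : f x = (WithLp.equiv 2 (Fin n → ℂ)).symm (R *ᵥ (WithLp.equiv 2 (Fin n → ℂ)) x) := by
      have := Matrix.toEuclideanCLM_toLp (𝕜 := ℂ) R ((WithLp.equiv 2 (Fin n → ℂ)) x)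
      simpa [Matrix.toLin'_apply] using this
    have h2 := h _ hx'
    have e1 := quad_norm_eq (R *ᵥ (WithLp.equiv 2 (Fin n → ℂ)) x)
    have e2 := quad_norm_eq ((WithLp.equiv 2 (Fin n → ℂ)) x)
    have hxx : (WithLp.equiv 2 (Fin n → ℂ)).symm ((WithLp.equiv 2 (Fin n → ℂ)) x) = x := by simp
    rw [hxx] at e2
    have e1' : ‖f x‖ ^ 2 = (star (R *ᵥ (WithLp.equiv 2 (Fin n → ℂ)) x) ⬝ᵥ R *ᵥ (WithLp.equiv 2 (Fin n → ℂ)) x).re := by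
      rw [h1]; exact e1
    nlinarith [norm_nonneg (f x), norm_nonneg x]
  -- max on the sphere
  obtain ⟨x₀, hx₀mem, hx₀max⟩ := (isCompact_sphere (0 : EuclideanSpace ℂ (Fin n)) 1).exists_isMaxOn
    (by
      refine ⟨EuclideanSpace.single ⟨0, hn⟩ (1 : ℂ), ?_⟩
      simp [mem_sphere_iff_norm, EuclideanSpace.norm_single])
    (Continuous.continuousOn (by continuity : Continuous fun x : EuclideanSpace ℂ (Fin n) => ‖f x‖))
  have hx₀norm : ‖x₀‖ = 1 := by simpa [mem_sphere_iff_norm] using hx₀mem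
  set c := ‖f x₀‖ with hc
  have hc1 : c < 1 := by
    have := hfx x₀ (by intro h0; rw [h0] at hx₀norm; simp at hx₀norm)
    rw [hx₀norm] at this; exact this
  have hc0 : 0 ≤ c := norm_nonneg _
  -- each spectral value has modulus ≤ c
  have key : ∀ μ ∈ spectrum ℂ R, ‖μ‖ ≤ c := by
    intro μ hμ
    rw [spectrum.mem_iff] at hμ
    have hdet : (algebraMap ℂ (Matrix (Fin n) (Fin n) ℂ) μ - R).det = 0 := by
      by_contra hne
      exact hμ ((Matrix.isUnit_iff_isUnit_det _).mpr (isUnit_iff_ne_zero.mpr hne))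
    obtain ⟨v, hv, hvz⟩ := (Matrix.exists_mulVec_eq_zero_iff).mpr hdet
    have heig : R *ᵥ v = μ • v := by
      have : (algebraMap ℂ (Matrix (Fin n) (Fin n) ℂ) μ) *ᵥ v - R *ᵥ v = 0 := by
        rw [← Matrix.sub_mulVec]; exact hvz
      have h2 : (algebraMap ℂ (Matrix (Fin n) (Fin n) ℂ) μ) *ᵥ v = μ • v := by
        simp [Algebra.algebraMap_eq_smul_one, Matrix.smul_mulVec]
      rw [h2] at this
      exact (sub_eq_zero.mp this).symm
    set xv : EuclideanSpace ℂ (Fin n) := (WithLp.equiv 2 (Fin n → ℂ)).symm v with hxv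
    have hxvne : xv ≠ 0 := by simpa [hxv] using hv
    have hxvnorm : 0 < ‖xv‖ := norm_pos_iff.mpr hxvne
    set w : EuclideanSpace ℂ (Fin n) := ((‖xv‖⁻¹ : ℝ) : ℂ) • xv with hw
    have hwnorm : ‖w‖ = 1 := by
      rw [hw, norm_smul]
      simp [abs_of_nonneg (le_of_lt (inv_pos.mpr hxvnorm)), inv_mul_cancel₀ (ne_of_gt hxvnorm)]
    have hfxv : f xv = μ • xv := by
      show Matrix.toEuclideanCLM (𝕜 := ℂ) R ((WithLp.equiv 2 (Fin n → ℂ)).symm v) = _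
      change WithLp.toLp 2 (R *ᵥ v) = _
      rw [heig]
      rfl
    have hfw : f w = ((‖xv‖⁻¹ : ℝ) : ℂ) • (μ • xv) := by
      rw [hw, ContinuousLinearMap.map_smul, hfxv]
    have : ‖f w‖ = ‖μ‖ := by
      rw [hfw, norm_smul, norm_smul]
      simp [abs_of_nonneg (le_of_lt (inv_pos.mpr hxvnorm))]
      field_simp
    have hmax : ‖f w‖ ≤ ‖f x₀‖ := hx₀max (by simpa [mem_sphere_iff_norm] using hwnorm)
    rw [this] at hmax
    exact hmax
  -- conclude
  calc spectralRadius ℂ R ≤ ENNReal.ofReal c := by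
        rw [spectralRadius]
        refine iSup₂_le fun μ hμ => ?_
        rw [← ENNReal.ofReal_coe_nnreal, coe_nnnorm]
        exact ENNReal.ofReal_le_ofReal (key μ hμ)
    _ < 1 := by
        rw [← ENNReal.ofReal_one]
        exact (ENNReal.ofReal_lt_ofReal_iff one_pos).mpr hc1

/-- `P` is positive semidefinite in the (possibly non-Hermitian) sense:
`Re (x* P x) ≥ 0` for all `x`. -/
def IsPSD {n : ℕ} (P : Matrix (Fin n) (Fin n) ℂ) : Prop :=
  ∀ x : Fin n → ℂ, 0 ≤ (star x ⬝ᵥ P *ᵥ x).re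

/-- `P` is positive definite in the (possibly non-Hermitian) sense:
`Re (x* P x) > 0` for all nonzero `x`. -/
def IsPD {n : ℕ} (P : Matrix (Fin n) (Fin n) ℂ) : Prop :=
  ∀ x : Fin n → ℂ, x ≠ 0 → 0 < (star x ⬝ᵥ P *ᵥ x).re

/-- The square root of a positive semidefinite matrix, as `Matrix.PosSemidef.sqrt` was defined
in the older Mathlib (since removed). -/
noncomputable def psdSqrtOld {n : ℕ} {Sg : Matrix (Fin n) (Fin n) ℂ} (hA : Sg.PosSemidef) :
    Matrix (Fin n) (Fin n) ℂ :=
  (hA.1.eigenvectorUnitary : Matrix (Fin n) (Fin n) ℂ) *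
    diagonal ((↑) ∘ (√·) ∘ hA.1.eigenvalues) *
    (star hA.1.eigenvectorUnitary : Matrix (Fin n) (Fin n) ℂ)

/-- `Σ^{-1/2} P Σ^{-1/2}` where `Σ^{1/2}` is the HPD square root of the HPD matrix `Sg`. -/
noncomputable def tild {n : ℕ} (Sg P : Matrix (Fin n) (Fin n) ℂ) (hS : Sg.PosDef) :
    Matrix (Fin n) (Fin n) ℂ :=
  (psdSqrtOld hS.posSemidef)⁻¹ * P * (psdSqrtOld hS.posSemidef)⁻¹

lemma psdSqrtOld_props {n : ℕ} {Sg : Matrix (Fin n) (Fin n) ℂ} (hA : Sg.PosSemidef) :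
    (psdSqrtOld hA)ᴴ = psdSqrtOld hA ∧ psdSqrtOld hA * psdSqrtOld hA = Sg := by
  constructor
  · simp [psdSqrtOld, conjTranspose_mul, Matrix.mul_assoc, diagonal_conjTranspose,
      star_eq_conjTranspose]
    rw [show star (Complex.ofReal ∘ (fun x => √x) ∘ hA.1.eigenvalues) =
      Complex.ofReal ∘ (fun x => √x) ∘ hA.1.eigenvalues from by funext i; simp]
  · have hU : (star hA.1.eigenvectorUnitary : Matrix (Fin n) (Fin n) ℂ) *
        (hA.1.eigenvectorUnitary : Matrix (Fin n) (Fin n) ℂ) = 1 := Unitary.coe_star_mul_self _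
    have hD : diagonal ((↑) ∘ (√·) ∘ hA.1.eigenvalues) *
        diagonal ((↑) ∘ (√·) ∘ hA.1.eigenvalues) =
        diagonal (RCLike.ofReal ∘ hA.1.eigenvalues : Fin n → ℂ) := by
      rw [diagonal_mul_diagonal]
      congr 1
      funext i
      simp only [Function.comp_apply]
      rw [← Complex.ofReal_mul, Real.mul_self_sqrt (hA.eigenvalues_nonneg i)]
      rfl
    conv_rhs => rw [hA.1.spectral_theorem, Unitary.conjStarAlgAut_apply]
    simp only [psdSqrtOld, Matrix.mul_assoc]
    rw [← Matrix.mul_assoc (star _ : Matrix (Fin n) (Fin n) ℂ)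
      (hA.1.eigenvectorUnitary : Matrix (Fin n) (Fin n) ℂ), hU, Matrix.one_mul,
      ← Matrix.mul_assoc (diagonal _) (diagonal _), hD]

theorem stmt14 {n : ℕ} (P1 P2 A Sg : Matrix (Fin n) (Fin n) ℂ)
    (hA : A = P1 + P2) (h1 : IsPSD P1) (h2 : IsPSD P2) (hS : Sg.PosDef)
    (hK : IsPD (tild Sg A hS + (tild Sg P1 hS)ᴴ * (tild Sg P2 hS)ᴴ * tild Sg A hS)) :
    spectralRadius ℂ ((Sg + P1)⁻¹ * (Sg - P2) * (Sg + P2)⁻¹ * (Sg - P1)) < 1 := by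
  classical
  set S := psdSqrtOld hS.posSemidef with hSdef
  have hSH : Sᴴ = S := (psdSqrtOld_props hS.posSemidef).1
  have hSS : S * S = Sg := (psdSqrtOld_props hS.posSemidef).2
  have hSd : IsUnit S.det := by
    have hSgd : Sg.det ≠ 0 := hS.det_pos.ne'
    rw [← hSS, det_mul] at hSgd
    exact isUnit_iff_ne_zero.mpr (by intro h; rw [h] at hSgd; simp at hSgd)
  set T := S⁻¹ with hTdef
  have hST : S * T = 1 := Matrix.mul_nonsing_inv S hSd
  have hTS : T * S = 1 := Matrix.nonsing_inv_mul S hSd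
  have hTH : Tᴴ = T := by rw [hTdef, Matrix.conjTranspose_nonsing_inv, hSH]
  set Q1 := tild Sg P1 hS with hQ1def
  set Q2 := tild Sg P2 hS with hQ2def
  have hQ1 : Q1 = T * P1 * T := rfl
  have hQ2 : Q2 = T * P2 * T := rfl
  -- PSD of the tilded matrices
  have hQ1psd : ∀ x : Fin n → ℂ, 0 ≤ (star x ⬝ᵥ Q1 *ᵥ x).re := by
    intro x; rw [hQ1, quad_sandwich T P1 hTH]; exact h1 _
  have hQ2psd : ∀ x : Fin n → ℂ, 0 ≤ (star x ⬝ᵥ Q2 *ᵥ x).re := by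
    intro x; rw [hQ2, quad_sandwich T P2 hTH]; exact h2 _
  -- invertibility of 1 ± Q
  have hpd : ∀ Q : Matrix (Fin n) (Fin n) ℂ, (∀ x, 0 ≤ (star x ⬝ᵥ Q *ᵥ x).re) →
      IsUnit (1 + Q).det := by
    intro Q hQ
    apply isUnit_det_of_pd
    intro x hx
    have e : star x ⬝ᵥ (1 + Q) *ᵥ x = star x ⬝ᵥ x + star x ⬝ᵥ Q *ᵥ x := by
      rw [Matrix.add_mulVec, Matrix.one_mulVec, dotProduct_add]
    rw [e, Complex.add_re]
    have := re_star_dot_pos hx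
    have := hQ x
    linarith
  have hu1 : IsUnit (1 + Q1).det := hpd Q1 hQ1psd
  have hu2 : IsUnit (1 + Q2).det := hpd Q2 hQ2psd
  set M := (1 + Q2) * (1 + Q1) with hMdef
  set N := (1 - Q2) * (1 - Q1) with hNdef
  have huM : IsUnit M.det := by rw [hMdef, det_mul]; exact hu2.mul hu1
  set K := tild Sg A hS + Q1ᴴ * Q2ᴴ * tild Sg A hS with hKdef0
  have hAt : tild Sg A hS = Q1 + Q2 := by
    rw [hQ1def, hQ2def, tild, tild, tild, hA]
    noncomm_ring
  have hKdef : K = (Q1 + Q2) + Q1ᴴ * Q2ᴴ * (Q1 + Q2) := by rw [hKdef0, hAt]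
  have hKH : Kᴴ = (Q1ᴴ + Q2ᴴ) + (Q1ᴴ + Q2ᴴ) * (Q2 * Q1) := by
    rw [hKdef]
    simp only [conjTranspose_add, conjTranspose_mul, conjTranspose_conjTranspose,
      Matrix.mul_assoc]
  -- the key identity  Mᴴ M - Nᴴ N = 2(K + Kᴴ)
  have hId : Mᴴ * M = Nᴴ * N + (K + Kᴴ + K + Kᴴ) := by
    have hMH : Mᴴ = (1 + Q1ᴴ) * (1 + Q2ᴴ) := by
      rw [hMdef]; simp [conjTranspose_mul, conjTranspose_add]
    have hNH : Nᴴ = (1 - Q1ᴴ) * (1 - Q2ᴴ) := by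
      rw [hNdef]; simp [conjTranspose_mul, conjTranspose_sub]
    rw [hMH, hNH, hKH, hKdef, hMdef, hNdef]
    noncomm_ring
  -- strict contraction for R = N * M⁻¹
  set R := N * M⁻¹ with hRdef
  have hcontr : ∀ x : Fin n → ℂ, x ≠ 0 →
      (star (R *ᵥ x) ⬝ᵥ (R *ᵥ x)).re < (star x ⬝ᵥ x).re := by
    intro x hx
    set v := M⁻¹ *ᵥ x with hvdef
    have hMv : M *ᵥ v = x := by
      rw [hvdef, Matrix.mulVec_mulVec, Matrix.mul_nonsing_inv _ huM, Matrix.one_mulVec]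
    have hvne : v ≠ 0 := by
      intro h0
      apply hx
      rw [← hMv, h0, Matrix.mulVec_zero]
    have hRx : R *ᵥ x = N *ᵥ v := by rw [hRdef, ← Matrix.mulVec_mulVec, hvdef]
    have eM : star (M *ᵥ v) ⬝ᵥ (M *ᵥ v) = star v ⬝ᵥ (Mᴴ * M) *ᵥ v := (quad_mul M M v).symm
    have eN : star (N *ᵥ v) ⬝ᵥ (N *ᵥ v) = star v ⬝ᵥ (Nᴴ * N) *ᵥ v := (quad_mul N N v).symm
    have expand : star v ⬝ᵥ (Mᴴ * M) *ᵥ v = star v ⬝ᵥ (Nᴴ * N) *ᵥ v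
        + star v ⬝ᵥ K *ᵥ v + star v ⬝ᵥ Kᴴ *ᵥ v + star v ⬝ᵥ K *ᵥ v + star v ⬝ᵥ Kᴴ *ᵥ v := by
      rw [hId]
      simp only [Matrix.add_mulVec, dotProduct_add]
      ring
    have hKv : 0 < (star v ⬝ᵥ K *ᵥ v).re := hK v hvne
    have hre := re_quad_conjTranspose K v
    rw [hRx, ← hMv, eM, eN, expand]
    simp only [Complex.add_re]
    linarith
  -- spectral radius of R is < 1
  have hRrad : spectralRadius ℂ R < 1 := specRadius_lt_one R hcontr
  -- the target matrix is similar to R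
  have e1p : Sg + P1 = S * (1 + Q1) * S := by
    rw [hQ1]
    have : S * (T * P1 * T) * S = (S * T) * P1 * (T * S) := by noncomm_ring
    rw [Matrix.mul_add, Matrix.add_mul, Matrix.mul_one, this, hST, hTS, one_mul, mul_one, hSS]
  have e2p : Sg + P2 = S * (1 + Q2) * S := by
    rw [hQ2]
    have : S * (T * P2 * T) * S = (S * T) * P2 * (T * S) := by noncomm_ring
    rw [Matrix.mul_add, Matrix.add_mul, Matrix.mul_one, this, hST, hTS, one_mul, mul_one, hSS]
  have e1m : Sg - P1 = S * (1 - Q1) * S := by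
    rw [hQ1]
    have : S * (T * P1 * T) * S = (S * T) * P1 * (T * S) := by noncomm_ring
    rw [Matrix.mul_sub, Matrix.sub_mul, Matrix.mul_one, this, hST, hTS, one_mul, mul_one, hSS]
  have e2m : Sg - P2 = S * (1 - Q2) * S := by
    rw [hQ2]
    have : S * (T * P2 * T) * S = (S * T) * P2 * (T * S) := by noncomm_ring
    rw [Matrix.mul_sub, Matrix.sub_mul, Matrix.mul_one, this, hST, hTS, one_mul, mul_one, hSS]
  have i1p : (Sg + P1)⁻¹ = T * (1 + Q1)⁻¹ * T := by
    rw [e1p, Matrix.mul_inv_rev, Matrix.mul_inv_rev, hTdef, Matrix.mul_assoc]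
  have i2p : (Sg + P2)⁻¹ = T * (1 + Q2)⁻¹ * T := by
    rw [e2p, Matrix.mul_inv_rev, Matrix.mul_inv_rev, hTdef, Matrix.mul_assoc]
  -- commutation of (1 - Q2) with (1 + Q2)⁻¹
  have hcomm : (1 - Q2) * (1 + Q2)⁻¹ = (1 + Q2)⁻¹ * (1 - Q2) := by
    have h0 : (1 - Q2) * (1 + Q2) = (1 + Q2) * (1 - Q2) := by noncomm_ring
    have hinv : (1 + Q2)⁻¹ * (1 + Q2) = 1 := Matrix.nonsing_inv_mul _ hu2
    have hinv' : (1 + Q2) * (1 + Q2)⁻¹ = 1 := Matrix.mul_nonsing_inv _ hu2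
    calc (1 - Q2) * (1 + Q2)⁻¹
        = ((1 + Q2)⁻¹ * (1 + Q2)) * ((1 - Q2) * (1 + Q2)⁻¹) := by rw [hinv, one_mul]
      _ = (1 + Q2)⁻¹ * (((1 + Q2) * (1 - Q2)) * (1 + Q2)⁻¹) := by
          simp only [Matrix.mul_assoc]
      _ = (1 + Q2)⁻¹ * (((1 - Q2) * (1 + Q2)) * (1 + Q2)⁻¹) := by rw [h0]
      _ = (1 + Q2)⁻¹ * (1 - Q2) := by rw [Matrix.mul_assoc (1 - Q2), hinv', mul_one]
  -- simplification helpers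
  have cTS : ∀ X : Matrix (Fin n) (Fin n) ℂ, T * (S * X) = X := by
    intro X; rw [← Matrix.mul_assoc, hTS, one_mul]
  have cST : ∀ X : Matrix (Fin n) (Fin n) ℂ, S * (T * X) = X := by
    intro X; rw [← Matrix.mul_assoc, hST, one_mul]
  have cMM : ∀ X : Matrix (Fin n) (Fin n) ℂ, M⁻¹ * (M * X) = X := by
    intro X; rw [← Matrix.mul_assoc, Matrix.nonsing_inv_mul _ huM, one_mul]
  set G := M * S with hGdef
  have hGu : IsUnit G := (Matrix.isUnit_iff_isUnit_det _).mpr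
    (by rw [hGdef, det_mul]; exact huM.mul hSd)
  have hsim : (Sg + P1)⁻¹ * (Sg - P2) * (Sg + P2)⁻¹ * (Sg - P1) = G⁻¹ * R * G := by
    have hGinv : G⁻¹ = T * ((1 + Q1)⁻¹ * (1 + Q2)⁻¹) := by
      rw [hGdef, Matrix.mul_inv_rev, hMdef, Matrix.mul_inv_rev, hTdef]
    have hMinv : M⁻¹ = (1 + Q1)⁻¹ * (1 + Q2)⁻¹ := by
      rw [hMdef, Matrix.mul_inv_rev]
    have cI1 : ∀ X : Matrix (Fin n) (Fin n) ℂ, (1 + Q1)⁻¹ * ((1 + Q1) * X) = X := by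
      intro X; rw [← Matrix.mul_assoc, Matrix.nonsing_inv_mul _ hu1, one_mul]
    have cI2 : ∀ X : Matrix (Fin n) (Fin n) ℂ, (1 + Q2)⁻¹ * ((1 + Q2) * X) = X := by
      intro X; rw [← Matrix.mul_assoc, Matrix.nonsing_inv_mul _ hu2, one_mul]
    have hcomm' : ∀ X : Matrix (Fin n) (Fin n) ℂ,
        (1 - Q2) * ((1 + Q2)⁻¹ * X) = (1 + Q2)⁻¹ * ((1 - Q2) * X) := by
      intro X; rw [← Matrix.mul_assoc, hcomm, Matrix.mul_assoc]
    rw [i1p, i2p, e2m, e1m, hGinv, hRdef, hGdef, hMinv, hNdef, hMdef]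
    simp only [Matrix.mul_assoc, cTS, cST, cI1, cI2, hcomm']
  -- conclude via conjugation invariance of the spectrum
  rw [hsim]
  obtain ⟨u, hu⟩ := hGu
  have hcoe : (G⁻¹ : Matrix (Fin n) (Fin n) ℂ) = ↑u⁻¹ := by
    rw [Matrix.coe_units_inv, hu]
  rw [spectralRadius, hcoe, ← hu, spectrum.units_conjugate']
  rw [spectralRadius] at hRrad
  exact hRrad
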